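/- arXiv:bayes-an/9609001 — 2 statements merged into one kernel-verified Lean document; each statement's English description precedes it below -/
import Mathlib

section
/- Let B and D be random vectors, let W be the Moore–Penrose inverse of Var(D) and U the Moore–Penrose inverse of Var(B). Then the adjusted variance satisfies Var_D(B) = (I − T_D(B))·Var(B), where T_D(B) = Cov(B,D)·W·Cov(D,B)·U. -/
open MeasureTheory Matrix

variable {Ω : Type*}

/-- The covariance matrix of two random vectors `B` (dimension `m`) and `D` (dimension `n`):
the `(i,j)` entry is `E[Bᵢ·Dⱼ] − E[Bᵢ]·E[Dⱼ]`. -/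
noncomputable def cov [MeasurableSpace Ω] (μ : Measure Ω) {m n : ℕ}
    (B : Fin m → Ω → ℝ) (D : Fin n → Ω → ℝ) : Matrix (Fin m) (Fin n) ℝ :=
  Matrix.of fun i j =>
    (∫ ω, B i ω * D j ω ∂μ) - (∫ ω, B i ω ∂μ) * (∫ ω, D j ω ∂μ)

/-- `W` is a Moore–Penrose inverse of `V`. -/
def IsMoorePenrose {m n : ℕ} (V : Matrix (Fin m) (Fin n) ℝ)
    (W : Matrix (Fin n) (Fin m) ℝ) : Prop :=
  V * W * V = V ∧ W * V * W = W ∧ (V * W)ᵀ = V * W ∧ (W * V)ᵀ = W * V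

/-- The adjusted expectation `E_D(B)` (computed with the matrix `W`, intended to be the
Moore–Penrose inverse of `Var(D)`): the `i`-th component is
`E[Bᵢ] + Σ_j (Cov(B,D)·W)_{ij}·(Dⱼ − E[Dⱼ])`. -/
noncomputable def adjExp [MeasurableSpace Ω] (μ : Measure Ω) {m n : ℕ}
    (B : Fin m → Ω → ℝ) (D : Fin n → Ω → ℝ)
    (W : Matrix (Fin n) (Fin n) ℝ) : Fin m → Ω → ℝ :=
  fun i ω => (∫ ω', B i ω' ∂μ) + ∑ j, (cov μ B D * W) i j * (D j ω - ∫ ω', D j ω' ∂μ)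

/-- The adjusted covariance `Cov_D(B,C) = Cov(B − E_D(B), C − E_D(C))`. -/
noncomputable def adjCov [MeasurableSpace Ω] (μ : Measure Ω) {m p n : ℕ}
    (B : Fin m → Ω → ℝ) (C : Fin p → Ω → ℝ) (D : Fin n → Ω → ℝ)
    (W : Matrix (Fin n) (Fin n) ℝ) : Matrix (Fin m) (Fin p) ℝ :=
  cov μ (fun i ω => B i ω - adjExp μ B D W i ω) (fun j ω => C j ω - adjExp μ C D W j ω)

/-
Put `P = Cov(B,D)·W`. Up to an additive constant the residual `B − E_D(B)` is `B − P·D`, so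
bilinearity of covariance gives `Var_D(B) = Var B − P·Cov(D,B) − Cov(B,D)·Pᵀ + P·Var(D)·Pᵀ`.
The Moore–Penrose inverse of the symmetric matrix `Var(D)` is symmetric and satisfies
`W·Var(D)·W = W`, which collapses this to `Var B − Cov(B,D)·W·Cov(D,B)`. Finally
`Cov(D,B)·U·Var(B) = Cov(D,B)`: if `Var(B)·x = 0` then `xᵀB` has variance zero, so it is almost
surely constant and uncorrelated with `D`; apply this to the columns of `1 − U·Var(B)`.
-/

open ProbabilityTheory

namespace IsMoorePenrose

variable {a b : ℕ} {V : Matrix (Fin a) (Fin b) ℝ} {W W' : Matrix (Fin b) (Fin a) ℝ}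

lemma transpose (h : IsMoorePenrose V W) : IsMoorePenrose Vᵀ Wᵀ := by
  obtain ⟨hVWV, hWVW, hVW, hWV⟩ := h
  refine ⟨?_, ?_, ?_, ?_⟩
  · rw [← transpose_mul, ← transpose_mul, ← Matrix.mul_assoc, hVWV]
  · rw [← transpose_mul, ← transpose_mul, ← Matrix.mul_assoc, hWVW]
  · rw [← transpose_mul, transpose_transpose, hWV]
  · rw [← transpose_mul, transpose_transpose, hVW]

lemma unique (h : IsMoorePenrose V W) (h' : IsMoorePenrose V W') : W = W' := by
  obtain ⟨hVWV, hWVW, hVW, hWV⟩ := h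
  obtain ⟨hVW'V, hW'VW', hVW', hW'V⟩ := h'
  have hleft : W = W * V * W' := calc
    W = W * (V * W)ᵀ := by rw [hVW, ← Matrix.mul_assoc, hWVW]
    _ = W * (V * W' * (V * W))ᵀ := by rw [← Matrix.mul_assoc, hVW'V]
    _ = W * V * W' := by
      rw [transpose_mul, hVW, hVW']
      simp only [← Matrix.mul_assoc, hWVW]
  have hright : W' = W * V * W' := calc
    W' = (W' * V)ᵀ * W' := by rw [hW'V, hW'VW']
    _ = (W' * V * (W * V))ᵀ * W' := by rw [Matrix.mul_assoc W', ← Matrix.mul_assoc V, hVWV]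
    _ = W * V * W' := by rw [transpose_mul, hWV, hW'V]; simp only [Matrix.mul_assoc, hW'VW']
  rw [hleft, ← hright]

end IsMoorePenrose

lemma IsMoorePenrose.isSymm {a : ℕ} {V W : Matrix (Fin a) (Fin a) ℝ}
    (h : IsMoorePenrose V W) (hV : V.IsSymm) : W.IsSymm :=
  (hV.eq ▸ h.transpose).unique h

section Covariance

variable [MeasurableSpace Ω] {μ : Measure Ω} {k l m n : ℕ}

lemma cov_transpose (F : Fin m → Ω → ℝ) (G : Fin n → Ω → ℝ) :
    (cov μ F G)ᵀ = cov μ G F := by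
  ext i j
  simp only [cov, transpose_apply, Matrix.of_apply, mul_comm]

lemma isSymm_cov_self (F : Fin m → Ω → ℝ) : (cov μ F F).IsSymm :=
  cov_transpose F F

lemma covariance_eq_zero_of_variance_eq_zero [IsFiniteMeasure μ] {X Y : Ω → ℝ}
    (hY : MemLp Y 2 μ) (h : Var[Y; μ] = 0) : cov[X, Y; μ] = 0 := by
  refine integral_eq_zero_of_ae ?_
  filter_upwards [ae_eq_integral_of_variance_eq_zero hY h] with ω hω
  simp [hω]

lemma memLp_sub_sum_mul {X : Ω → ℝ} {G : Fin n → Ω → ℝ} (hX : MemLp X 2 μ)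
    (hG : ∀ j, MemLp (G j) 2 μ) (c : Fin n → ℝ) : MemLp (fun ω => X ω - ∑ j, c j * G j ω) 2 μ :=
  hX.sub (memLp_finsetSum _ fun j _ => (hG j).const_mul (c j))

variable [IsProbabilityMeasure μ] {F : Fin m → Ω → ℝ} {G : Fin n → Ω → ℝ} {H : Fin k → Ω → ℝ}

lemma cov_apply_eq_covariance (hF : ∀ i, MemLp (F i) 2 μ) (hG : ∀ j, MemLp (G j) 2 μ)
    (i : Fin m) (j : Fin n) : cov μ F G i j = cov[F i, G j; μ] := by
  rw [covariance_eq_sub (hF i) (hG j)]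
  rfl

lemma cov_sub_const (hF : ∀ i, MemLp (F i) 2 μ) (hG : ∀ j, MemLp (G j) 2 μ)
    (a : Fin m → ℝ) (b : Fin n → ℝ) :
    cov μ (fun i ω => F i ω - a i) (fun j ω => G j ω - b j) = cov μ F G := by
  ext i j
  rw [cov_apply_eq_covariance (F := fun i ω => F i ω - a i) (G := fun j ω => G j ω - b j)
    (fun i => (hF i).sub (memLp_const _)) (fun j => (hG j).sub (memLp_const _)),
    cov_apply_eq_covariance hF hG,
    covariance_sub_const_left ((hF i).integrable one_le_two),
    covariance_sub_const_right ((hG j).integrable one_le_two)]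

lemma cov_mul_apply (hG : ∀ j, MemLp (G j) 2 μ) (hH : ∀ c, MemLp (H c) 2 μ)
    (M : Matrix (Fin k) (Fin l) ℝ) (j : Fin n) (c : Fin l) :
    (cov μ G H * M) j c = cov[G j, fun ω => ∑ r, M r c * H r ω; μ] := by
  rw [covariance_fun_sum_right (fun r => (hH r).const_mul (M r c)) (hG j)]
  simp only [Matrix.mul_apply, cov_apply_eq_covariance hG hH, covariance_const_mul_right]
  exact Finset.sum_congr rfl fun r _ => mul_comm _ _

lemma cov_sub_mul_left (hF : ∀ i, MemLp (F i) 2 μ) (hG : ∀ j, MemLp (G j) 2 μ)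
    (hH : ∀ c, MemLp (H c) 2 μ) (A : Matrix (Fin m) (Fin n) ℝ) :
    cov μ (fun i ω => F i ω - ∑ j, A i j * G j ω) H = cov μ F H - A * cov μ G H := by
  ext i c
  rw [cov_apply_eq_covariance (fun i => memLp_sub_sum_mul (hF i) hG (A i)) hH,
    covariance_fun_sub_left (hF i) (memLp_finsetSum _ fun j _ => (hG j).const_mul (A i j)) (hH c),
    covariance_fun_sum_left (fun j => (hG j).const_mul (A i j)) (hH c)]
  simp only [Matrix.sub_apply, Matrix.mul_apply, cov_apply_eq_covariance hF hH,
    cov_apply_eq_covariance hG hH, covariance_const_mul_left]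

lemma cov_sub_mul_right (hF : ∀ i, MemLp (F i) 2 μ) (hG : ∀ j, MemLp (G j) 2 μ)
    (hH : ∀ c, MemLp (H c) 2 μ) (A : Matrix (Fin m) (Fin n) ℝ) :
    cov μ H (fun i ω => F i ω - ∑ j, A i j * G j ω) = cov μ H F - cov μ H G * Aᵀ := by
  rw [← cov_transpose, cov_sub_mul_left hF hG hH, transpose_sub, transpose_mul,
    cov_transpose, cov_transpose]

lemma cov_mul_eq_zero_of_cov_self_mul_eq_zero (hG : ∀ j, MemLp (G j) 2 μ)
    (hH : ∀ c, MemLp (H c) 2 μ) {M : Matrix (Fin k) (Fin l) ℝ} (hM : cov μ H H * M = 0) :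
    cov μ G H * M = 0 := by
  ext j c
  have hS : MemLp (fun ω => ∑ r, M r c * H r ω) 2 μ :=
    memLp_finsetSum _ fun r _ => (hH r).const_mul (M r c)
  have hVar : Var[fun ω => ∑ r, M r c * H r ω; μ] = 0 := by
    rw [← covariance_self hS.aemeasurable,
      covariance_fun_sum_left (fun r => (hH r).const_mul (M r c)) hS]
    simp only [covariance_const_mul_left, ← cov_mul_apply hH hH, hM, Matrix.zero_apply,
      mul_zero, Finset.sum_const_zero]
  rw [cov_mul_apply hG hH, covariance_eq_zero_of_variance_eq_zero hS hVar, Matrix.zero_apply]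

lemma cov_mul_mul_cov_self (hG : ∀ j, MemLp (G j) 2 μ) (hH : ∀ c, MemLp (H c) 2 μ)
    {U : Matrix (Fin k) (Fin k) ℝ} (hU : cov μ H H * U * cov μ H H = cov μ H H) :
    cov μ G H * U * cov μ H H = cov μ G H := by
  have h := cov_mul_eq_zero_of_cov_self_mul_eq_zero hG hH (M := 1 - U * cov μ H H)
    (by rw [Matrix.mul_sub, Matrix.mul_one, ← Matrix.mul_assoc, hU, sub_self])
  rwa [Matrix.mul_sub, Matrix.mul_one, ← Matrix.mul_assoc, sub_eq_zero, eq_comm] at h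

end Covariance

section AdjustedCovariance

variable [MeasurableSpace Ω] {μ : Measure Ω} {m n p : ℕ}

lemma sub_adjExp_eq (B : Fin m → Ω → ℝ) (D : Fin n → Ω → ℝ) (W : Matrix (Fin n) (Fin n) ℝ)
    (i : Fin m) (ω : Ω) :
    B i ω - adjExp μ B D W i ω = (B i ω - ∑ j, (cov μ B D * W) i j * D j ω)
      - ((∫ ω', B i ω' ∂μ) - ∑ j, (cov μ B D * W) i j * ∫ ω', D j ω' ∂μ) := by
  simp only [adjExp, mul_sub, Finset.sum_sub_distrib]
  ring

lemma adjCov_eq [IsProbabilityMeasure μ] {B : Fin m → Ω → ℝ} {C : Fin p → Ω → ℝ}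
    {D : Fin n → Ω → ℝ} (hB : ∀ i, MemLp (B i) 2 μ) (hC : ∀ i, MemLp (C i) 2 μ)
    (hD : ∀ j, MemLp (D j) 2 μ) (W : Matrix (Fin n) (Fin n) ℝ) :
    adjCov μ B C D W = cov μ B C - cov μ B D * (cov μ C D * W)ᵀ - cov μ B D * W * cov μ D C
      + cov μ B D * W * cov μ D D * (cov μ C D * W)ᵀ := by
  simp only [adjCov, sub_adjExp_eq]
  erw [cov_sub_const (fun i => memLp_sub_sum_mul (hB i) hD _)
      (fun i => memLp_sub_sum_mul (hC i) hD _),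
    cov_sub_mul_left hB hD (fun i => memLp_sub_sum_mul (hC i) hD _),
    cov_sub_mul_right hC hD hB, cov_sub_mul_right hC hD hD]
  simp only [Matrix.mul_sub, Matrix.mul_assoc]
  abel

end AdjustedCovariance

/-- `Var_D(B) = (I − T_D(B))·Var(B)` where
`T_D(B) = Cov(B,D)·W·Cov(D,B)·U`, `W` is the Moore–Penrose inverse of `Var(D)` and
`U` is the Moore–Penrose inverse of `Var(B)`. -/
theorem adjVar_eq [MeasurableSpace Ω] (μ : Measure Ω) [IsProbabilityMeasure μ]
    {m n : ℕ} (B : Fin m → Ω → ℝ) (D : Fin n → Ω → ℝ)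
    (hB : ∀ i, Measurable (B i) ∧ MemLp (B i) 2 μ)
    (hD : ∀ i, Measurable (D i) ∧ MemLp (D i) 2 μ)
    (W : Matrix (Fin n) (Fin n) ℝ) (hW : IsMoorePenrose (cov μ D D) W)
    (U : Matrix (Fin m) (Fin m) ℝ) (hU : IsMoorePenrose (cov μ B B) U) :
    adjCov μ B B D W = (1 - cov μ B D * W * cov μ D B * U) * cov μ B B := by
  have hB2 : ∀ i, MemLp (B i) 2 μ := fun i => (hB i).2
  have hD2 : ∀ j, MemLp (D j) 2 μ := fun j => (hD j).2
  have hWsymm : Wᵀ = W := (hW.isSymm (isSymm_cov_self D)).eq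
  have hrange : cov μ D B * U * cov μ B B = cov μ D B := cov_mul_mul_cov_self hD2 hB2 hU.1
  have hWVW : cov μ B D * W * cov μ D D * (W * cov μ D B) = cov μ B D * W * cov μ D B := calc
    _ = cov μ B D * (W * cov μ D D * W) * cov μ D B := by simp only [Matrix.mul_assoc]
    _ = _ := by rw [hW.2.1]
  calc adjCov μ B B D W = cov μ B B - cov μ B D * W * cov μ D B := by
        rw [adjCov_eq hB2 hB2 hD2, transpose_mul, hWsymm, cov_transpose, hWVW,
          ← Matrix.mul_assoc]
        abel
    _ = (1 - cov μ B D * W * cov μ D B * U) * cov μ B B := by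
        rw [Matrix.sub_mul, Matrix.one_mul, Matrix.mul_assoc (cov μ B D * W),
          Matrix.mul_assoc (cov μ B D * W), hrange]
end

section
/- Adjusted orthogonality satisfies the weak union property of a generalised conditional independence relation: let B, C, D, E be random vectors and let (D,E) denote the stacked random vector whose components are those of D followed by those of E. If Cov_E(B,C) = 0 and Cov_E(B,D) = 0, then Cov_{(D,E)}(B,C) = 0, where each subscripted operator uses the Moore–Penrose inverse of the corresponding variance matrix. -/
open MeasureTheory Matrix

variable {Ω : Type*}

/-!
Centre every component and work in `L²(μ)`, where covariances are inner products and
`Cov_F(B, C)` is the inner product of the residuals of `B` and `C` after `F` (`orthResidual`).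
Let `β` be the residual of `B` after `E`. It is orthogonal to every `Eₖ`, and the hypotheses
make it orthogonal to `C` and to every `Dₖ`, hence to `span (D, E)`. As `B - β ∈ span E ⊆
span (D, E)`, `β` is also the residual of `B` after `(D, E)`, and it is orthogonal to `C`.
-/

open scoped InnerProductSpace
open Submodule

section OrthResidual

variable {H : Type*} [NormedAddCommGroup H] [InnerProductSpace ℝ H] {ι : Type*}

theorem mem_orthogonal_span_range_iff {f : ι → H} {v : H} :
    v ∈ (span ℝ (Set.range f))ᗮ ↔ ∀ k, ⟪f k, v⟫_ℝ = 0 := by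
  rw [← span_singleton_le_iff_mem, ← isOrtho_iff_le, isOrtho_comm, isOrtho_span]
  simp

variable [Fintype ι]

/-- When `W` is a generalised inverse of the Gram matrix of `f`, this is `x` minus its orthogonal
projection onto the span of `f`. -/
noncomputable def orthResidual (f : ι → H) (W : Matrix ι ι ℝ) (x : H) : H :=
  x - ∑ k, ((fun l => ⟪x, f l⟫_ℝ) ᵥ* W) k • f k

theorem sum_smul_eq_zero_of_gram_mulVec_eq_zero {f : ι → H} {u : ι → ℝ}
    (h : gram ℝ f *ᵥ u = 0) : ∑ k, u k • f k = 0 := by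
  rw [← inner_self_eq_zero (𝕜 := ℝ), ← star_dotProduct_gram_mulVec, h, dotProduct_zero]

theorem orthResidual_mem_orthogonal {f : ι → H} {W : Matrix ι ι ℝ}
    (hW : gram ℝ f * W * gram ℝ f = gram ℝ f) (x : H) :
    orthResidual f W x ∈ (span ℝ (Set.range f))ᗮ := by
  classical
  rw [mem_orthogonal_span_range_iff]
  intro l
  set a : ι → ℝ := fun k => ⟪x, f k⟫_ℝ
  have hcol : ∑ k, (1 - W * gram ℝ f) k l • f k = 0 := by
    refine sum_smul_eq_zero_of_gram_mulVec_eq_zero (funext fun j => ?_)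
    have hGM : gram ℝ f * (1 - W * gram ℝ f) = 0 := by
      rw [Matrix.mul_sub, Matrix.mul_one, ← Matrix.mul_assoc, hW, sub_self]
    exact congr_fun₂ hGM j l
  calc ⟪f l, orthResidual f W x⟫_ℝ = a l - (a ᵥ* W ᵥ* gram ℝ f) l := by
        simp [orthResidual, a, inner_sub_right, inner_sum, inner_smul_right, vecMul, dotProduct,
          real_inner_comm]
    _ = (a ᵥ* (1 - W * gram ℝ f)) l := by
        rw [vecMul_sub, vecMul_one, vecMul_vecMul]; rfl
    _ = ⟪x, ∑ k, (1 - W * gram ℝ f) k l • f k⟫_ℝ := by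
        simp [a, inner_sum, inner_smul_right, vecMul, dotProduct, mul_comm]
    _ = 0 := by rw [hcol, inner_zero_right]

theorem sub_orthResidual_mem_span (f : ι → H) (W : Matrix ι ι ℝ) (x : H) :
    x - orthResidual f W x ∈ span ℝ (Set.range f) := by
  rw [orthResidual, sub_sub_cancel]
  exact sum_mem fun k _ => smul_mem _ _ (subset_span ⟨k, rfl⟩)

theorem orthResidual_eq_of_mem_orthogonal {f : ι → H} {W : Matrix ι ι ℝ}
    (hW : gram ℝ f * W * gram ℝ f = gram ℝ f) {x y : H}
    (hy : y ∈ (span ℝ (Set.range f))ᗮ) (hxy : x - y ∈ span ℝ (Set.range f)) :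
    orthResidual f W x = y := by
  have hspan : orthResidual f W x - y ∈ span ℝ (Set.range f) := by
    simpa using sub_mem hxy (sub_orthResidual_mem_span f W x)
  have horth : orthResidual f W x - y ∈ (span ℝ (Set.range f))ᗮ :=
    sub_mem (orthResidual_mem_orthogonal hW x) hy
  exact sub_eq_zero.mp ((span ℝ (Set.range f)).disjoint_def.mp
    (span ℝ (Set.range f)).orthogonal_disjoint _ hspan horth)

theorem inner_orthResidual_orthResidual {f : ι → H} {W : Matrix ι ι ℝ}
    (hW : gram ℝ f * W * gram ℝ f = gram ℝ f) (x y : H) :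
    ⟪orthResidual f W x, orthResidual f W y⟫_ℝ = ⟪orthResidual f W x, y⟫_ℝ := by
  have := inner_left_of_mem_orthogonal (sub_orthResidual_mem_span f W y)
    (orthResidual_mem_orthogonal hW x)
  rwa [inner_sub_right, sub_eq_zero, eq_comm] at this

end OrthResidual

theorem inner_orthResidual_append_eq_zero {H : Type*} [NormedAddCommGroup H]
    [InnerProductSpace ℝ H] {m n : ℕ} {d : Fin m → H} {e : Fin n → H}
    {WE : Matrix (Fin n) (Fin n) ℝ} {WDE : Matrix (Fin (m + n)) (Fin (m + n)) ℝ}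
    (hWE : gram ℝ e * WE * gram ℝ e = gram ℝ e)
    (hWDE : gram ℝ (Fin.append d e) * WDE * gram ℝ (Fin.append d e) = gram ℝ (Fin.append d e))
    {x y : H} (hxy : ⟪orthResidual e WE x, orthResidual e WE y⟫_ℝ = 0)
    (hxd : ∀ k, ⟪orthResidual e WE x, orthResidual e WE (d k)⟫_ℝ = 0) :
    ⟪orthResidual (Fin.append d e) WDE x, orthResidual (Fin.append d e) WDE y⟫_ℝ = 0 := by
  set β := orthResidual e WE x
  have hβe : β ∈ (span ℝ (Set.range e))ᗮ := orthResidual_mem_orthogonal hWE x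
  have hβde : β ∈ (span ℝ (Set.range (Fin.append d e)))ᗮ := by
    rw [mem_orthogonal_span_range_iff] at hβe ⊢
    refine Fin.addCases (fun k => ?_) (fun k => ?_)
    · rw [Fin.append_left, real_inner_comm, ← inner_orthResidual_orthResidual hWE]
      exact hxd k
    · rw [Fin.append_right]
      exact hβe k
  have hrange : Set.range e ⊆ Set.range (Fin.append d e) :=
    Set.range_subset_iff.2 fun k => ⟨Fin.natAdd m k, Fin.append_right d e k⟩
  have hres : orthResidual (Fin.append d e) WDE x = β :=
    orthResidual_eq_of_mem_orthogonal hWDE hβde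
      (span_mono hrange (sub_orthResidual_mem_span e WE x))
  rw [inner_orthResidual_orthResidual hWDE, hres, ← inner_orthResidual_orthResidual hWE, hxy]

section Centered

variable [MeasurableSpace Ω] {μ : Measure Ω}

theorem inner_toLp {f g : Ω → ℝ} (hf : MemLp f 2 μ) (hg : MemLp g 2 μ) :
    ⟪hf.toLp f, hg.toLp g⟫_ℝ = ∫ ω, f ω * g ω ∂μ := by
  rw [L2.inner_def]
  refine integral_congr_ae ?_
  filter_upwards [hf.coeFn_toLp, hg.coeFn_toLp] with ω hfω hgω
  simp [hfω, hgω, mul_comm]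

variable (μ) in
noncomputable def centeredLp [IsFiniteMeasure μ] (f : Ω → ℝ) (hf : MemLp f 2 μ) : Lp ℝ 2 μ :=
  hf.toLp f - (memLp_const (∫ ω, f ω ∂μ)).toLp _

variable [IsProbabilityMeasure μ]

theorem coeFn_centeredLp {f : Ω → ℝ} (hf : MemLp f 2 μ) :
    centeredLp μ f hf =ᵐ[μ] fun ω => f ω - ∫ ω', f ω' ∂μ := by
  filter_upwards [Lp.coeFn_sub (hf.toLp f) ((memLp_const (∫ ω, f ω ∂μ)).toLp _),
    hf.coeFn_toLp, (memLp_const (μ := μ) (∫ ω, f ω ∂μ)).coeFn_toLp] with ω hsub hfω hcω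
  rw [centeredLp, hsub, Pi.sub_apply, hfω, hcω]

theorem inner_centeredLp {f g : Ω → ℝ} (hf : MemLp f 2 μ) (hg : MemLp g 2 μ) :
    ⟪centeredLp μ f hf, centeredLp μ g hg⟫_ℝ =
      (∫ ω, f ω * g ω ∂μ) - (∫ ω, f ω ∂μ) * (∫ ω, g ω ∂μ) := by
  simp only [centeredLp, inner_sub_left, inner_sub_right, inner_toLp, integral_mul_const,
    integral_const_mul, integral_const, probReal_univ, one_smul]
  ring

theorem cov_apply_eq_inner {m n : ℕ} {B : Fin m → Ω → ℝ} {F : Fin n → Ω → ℝ}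
    (hB : ∀ i, MemLp (B i) 2 μ) (hF : ∀ k, MemLp (F k) 2 μ) (i : Fin m) (k : Fin n) :
    cov μ B F i k = ⟪centeredLp μ (B i) (hB i), centeredLp μ (F k) (hF k)⟫_ℝ :=
  (inner_centeredLp (hB i) (hF k)).symm

theorem cov_self_eq_gram {n : ℕ} {F : Fin n → Ω → ℝ} (hF : ∀ k, MemLp (F k) 2 μ) :
    cov μ F F = gram ℝ fun k => centeredLp μ (F k) (hF k) :=
  Matrix.ext (cov_apply_eq_inner hF hF)

end Centered

section AdjustedExpectation

variable [MeasurableSpace Ω] {μ : Measure Ω} [IsProbabilityMeasure μ] {m n : ℕ}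
  {B : Fin m → Ω → ℝ} {F : Fin n → Ω → ℝ}

theorem memLp_adjExp (hF : ∀ k, MemLp (F k) 2 μ) (W : Matrix (Fin n) (Fin n) ℝ) (i : Fin m) :
    MemLp (adjExp μ B F W i) 2 μ := by
  have hsum : MemLp (fun ω => ∑ k, (cov μ B F * W) i k * (F k ω - ∫ ω', F k ω' ∂μ)) 2 μ :=
    memLp_finsetSum (μ := μ) _ fun k _ => ((hF k).sub (memLp_const _)).const_mul _
  exact (memLp_const (μ := μ) (∫ ω, B i ω ∂μ)).add hsum

theorem integral_adjExp (hF : ∀ k, MemLp (F k) 2 μ) (W : Matrix (Fin n) (Fin n) ℝ)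
    (i : Fin m) : ∫ ω, adjExp μ B F W i ω ∂μ = ∫ ω, B i ω ∂μ := by
  have hint : ∀ k, Integrable (fun ω => (cov μ B F * W) i k * (F k ω - ∫ ω', F k ω' ∂μ)) μ :=
    fun k => (((hF k).sub (memLp_const _)).const_mul _).integrable one_le_two
  have hcentered : ∀ k, ∫ ω, (F k ω - ∫ ω', F k ω' ∂μ) ∂μ = 0 := fun k => by
    rw [integral_sub ((hF k).integrable one_le_two) (integrable_const _)]
    simp
  simp only [adjExp]
  rw [integral_add (integrable_const _) (integrable_finsetSum _ fun k _ => hint k),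
    integral_finsetSum _ fun k _ => hint k]
  simp [integral_const_mul, hcentered]

theorem centeredLp_sub_adjExp (hB : ∀ i, MemLp (B i) 2 μ) (hF : ∀ k, MemLp (F k) 2 μ)
    (W : Matrix (Fin n) (Fin n) ℝ) (i : Fin m) :
    centeredLp μ (fun ω => B i ω - adjExp μ B F W i ω) ((hB i).sub (memLp_adjExp hF W i)) =
      orthResidual (fun k => centeredLp μ (F k) (hF k)) W (centeredLp μ (B i) (hB i)) := by
  have hcoef : ∀ k, (cov μ B F * W) i k =
      ((fun l => ⟪centeredLp μ (B i) (hB i), centeredLp μ (F l) (hF l)⟫_ℝ) ᵥ* W) k := fun k => by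
    simp only [Matrix.mul_apply, vecMul, dotProduct, cov_apply_eq_inner hB hF]
  have hmean : ∫ ω, (B i ω - adjExp μ B F W i ω) ∂μ = 0 := by
    rw [integral_sub ((hB i).integrable one_le_two) ((memLp_adjExp hF W i).integrable one_le_two),
      integral_adjExp hF W i, sub_self]
  have hsmul : ∀ᵐ ω ∂μ, ∀ k, ((cov μ B F * W) i k • centeredLp μ (F k) (hF k) : Lp ℝ 2 μ) ω =
      (cov μ B F * W) i k * (F k ω - ∫ ω', F k ω' ∂μ) := by
    refine ae_all_iff.2 fun k => ?_
    filter_upwards [Lp.coeFn_smul ((cov μ B F * W) i k) (centeredLp μ (F k) (hF k)),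
      coeFn_centeredLp (hF k)] with ω hsmulω hFω
    rw [hsmulω, Pi.smul_apply, hFω, smul_eq_mul]
  simp only [orthResidual, ← hcoef]
  apply Lp.ext
  filter_upwards [coeFn_centeredLp (f := fun ω => B i ω - adjExp μ B F W i ω)
      ((hB i).sub (memLp_adjExp hF W i)), coeFn_centeredLp (hB i),
    Lp.coeFn_sub (centeredLp μ (B i) (hB i))
      (∑ k, (cov μ B F * W) i k • centeredLp μ (F k) (hF k)),
    Lp.coeFn_finsetSum Finset.univ fun k => (cov μ B F * W) i k • centeredLp μ (F k) (hF k),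
    hsmul] with ω hrω hBω hsubω hsumω hsmulω
  rw [hrω, hmean, hsubω, Pi.sub_apply, hBω, hsumω, Finset.sum_apply]
  simp only [hsmulω, adjExp]
  ring

theorem adjCov_apply_eq_inner {p : ℕ} {C : Fin p → Ω → ℝ} (hB : ∀ i, MemLp (B i) 2 μ)
    (hC : ∀ j, MemLp (C j) 2 μ) (hF : ∀ k, MemLp (F k) 2 μ) (W : Matrix (Fin n) (Fin n) ℝ)
    (i : Fin m) (j : Fin p) :
    adjCov μ B C F W i j =
      ⟪orthResidual (fun k => centeredLp μ (F k) (hF k)) W (centeredLp μ (B i) (hB i)),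
        orthResidual (fun k => centeredLp μ (F k) (hF k)) W (centeredLp μ (C j) (hC j))⟫_ℝ := by
  rw [adjCov, cov_apply_eq_inner (B := fun i ω => B i ω - adjExp μ B F W i ω)
    (F := fun j ω => C j ω - adjExp μ C F W j ω) (fun i => (hB i).sub (memLp_adjExp hF W i))
    (fun j => (hC j).sub (memLp_adjExp hF W j)), centeredLp_sub_adjExp, centeredLp_sub_adjExp]

end AdjustedExpectation

section Append

variable [MeasurableSpace Ω] {μ : Measure Ω} {m n : ℕ} {D : Fin m → Ω → ℝ} {E : Fin n → Ω → ℝ}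

theorem memLp_append {p : ENNReal} (hD : ∀ k, MemLp (D k) p μ) (hE : ∀ k, MemLp (E k) p μ)
    (k : Fin (m + n)) : MemLp (Fin.append D E k) p μ := by
  refine Fin.addCases (fun k => ?_) (fun k => ?_) k <;> simp [hD, hE]

theorem centeredLp_append [IsFiniteMeasure μ] (hD : ∀ k, MemLp (D k) 2 μ)
    (hE : ∀ k, MemLp (E k) 2 μ) :
    (fun k => centeredLp μ (Fin.append D E k) (memLp_append hD hE k)) =
      Fin.append (fun k => centeredLp μ (D k) (hD k)) (fun k => centeredLp μ (E k) (hE k)) := by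
  funext k
  refine Fin.addCases (fun k => ?_) (fun k => ?_) k <;> simp

end Append

/-- weak union: if `Cov_E(B,C) = 0` and `Cov_E(B,D) = 0`, then
`Cov_{(D,E)}(B,C) = 0`, where `(D,E)` is the stacked vector `Fin.append D E` and each
subscripted operator uses the Moore–Penrose inverse of the corresponding variance matrix. -/
theorem adjOrth_weak_union [MeasurableSpace Ω] (μ : Measure Ω) [IsProbabilityMeasure μ]
    {mb mc md me : ℕ} (B : Fin mb → Ω → ℝ) (C : Fin mc → Ω → ℝ)
    (D : Fin md → Ω → ℝ) (E : Fin me → Ω → ℝ)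
    (hB : ∀ i, Measurable (B i) ∧ MemLp (B i) 2 μ)
    (hC : ∀ i, Measurable (C i) ∧ MemLp (C i) 2 μ)
    (hD : ∀ i, Measurable (D i) ∧ MemLp (D i) 2 μ)
    (hE : ∀ i, Measurable (E i) ∧ MemLp (E i) 2 μ)
    (WE : Matrix (Fin me) (Fin me) ℝ) (hWE : IsMoorePenrose (cov μ E E) WE)
    (WDE : Matrix (Fin (md + me)) (Fin (md + me)) ℝ)
    (hWDE : IsMoorePenrose (cov μ (Fin.append D E) (Fin.append D E)) WDE)
    (hBC : adjCov μ B C E WE = 0) (hBD : adjCov μ B D E WE = 0) :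
    adjCov μ B C (Fin.append D E) WDE = 0 := by
  have hB2 i := (hB i).2
  have hC2 i := (hC i).2
  have hD2 i := (hD i).2
  have hE2 i := (hE i).2
  ext i j
  rw [adjCov_apply_eq_inner hB2 hC2 (memLp_append hD2 hE2), centeredLp_append hD2 hE2,
    Matrix.zero_apply]
  refine inner_orthResidual_append_eq_zero (WE := WE) ?_ ?_ ?_ fun k => ?_
  · rw [← cov_self_eq_gram]
    exact hWE.1
  · rw [← centeredLp_append hD2 hE2, ← cov_self_eq_gram]
    exact hWDE.1
  · rw [← adjCov_apply_eq_inner, hBC, Matrix.zero_apply]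
  · rw [← adjCov_apply_eq_inner hB2 hD2, hBD, Matrix.zero_apply]
end
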